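/- Let X ⊆ ℝ^D be open. There exists a continuous function F, defined on the set of all (θ_<∘ι')-names of open subsets of X, such that for every open U ⊆ X and every (θ_<∘ι')-name p of U, F(p) is a δ_{Σ_2}-name of U. (That is, θ_<∘ι' continuously reduces to δ_{Σ_2} restricted to Σ_1(X).) -/

import Mathlib

open Filter Topology

/- The name spaces are products of countable discrete sets; `ℚ` is taken discrete. -/
local instance : TopologicalSpace ℚ := ⊥

/-- The open euclidean ball in ℝ^D with rational center and radius (empty if `r ≤ 0`). -/
def ratBall (D : ℕ) (c : Fin D → ℚ) (r : ℚ) : Set (EuclideanSpace ℝ (Fin D)) :=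
  Metric.ball (WithLp.toLp 2 (fun i => ((c i : ℝ))) : EuclideanSpace ℝ (Fin D)) (r : ℝ)

/-- `IsSigmaName D X d p S` : `p` is a δ_{Σ_{d+1}}-name of `S ∈ Σ_{d+1}(X)`:
for `d = 0`, a θ_<-name (a list of rational open balls inside `X` whose union is `S`);
for `d+1`, via the pairing a sequence of δ_{Σ_d}-names of sets `T m` with
`S = ⋃ m, X ∖ T m`. -/
def IsSigmaName (D : ℕ) (X : Set (EuclideanSpace ℝ (Fin D))) :
    ℕ → (ℕ → (Fin D → ℚ) × ℚ) → Set (EuclideanSpace ℝ (Fin D)) → Prop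
  | 0, p, S => (∀ k, ratBall D (p k).1 (p k).2 ⊆ X) ∧ S = ⋃ k, ratBall D (p k).1 (p k).2
  | d+1, p, S => ∃ T : ℕ → Set (EuclideanSpace ℝ (Fin D)),
      (∀ m, IsSigmaName D X d (fun k => p (Nat.pair m k)) (T m)) ∧ S = ⋃ m, X \ T m

/-- A (θ_<∘ι')-name of an open `U ⊆ X`: a double sequence of (center,radius) pairs
(via `Nat.pair`) each of whose rows is eventually constant, the sequence of row
limits being a θ_<-name (= δ_{Σ_1}-name) of `U`. -/
def IsThetaJumpName (D : ℕ) (X : Set (EuclideanSpace ℝ (Fin D)))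
    (p : ℕ → (Fin D → ℚ) × ℚ) (U : Set (EuclideanSpace ℝ (Fin D))) : Prop :=
  ∃ z : ℕ → (Fin D → ℚ) × ℚ,
    (∀ n : ℕ, ∃ M : ℕ, ∀ m : ℕ, M ≤ m → p (Nat.pair n m) = z n) ∧
    IsSigmaName D X 0 z U

lemma ratdense (D : ℕ) (x : EuclideanSpace ℝ (Fin D)) {ε : ℝ} (hε : 0 < ε) :
    ∃ c : Fin D → ℚ, dist x (WithLp.toLp 2 (fun i => (c i : ℝ))) < ε := by
  have hδ : 0 < ε / (D + 1) := by positivity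
  choose c hc using fun i => exists_rat_near (x i) hδ
  refine ⟨c, ?_⟩
  rw [EuclideanSpace.dist_eq, Real.sqrt_lt' hε]
  have hle : ∀ i ∈ Finset.univ, dist (x i) ((c i : ℝ)) ^ 2 ≤ (ε / (D + 1)) ^ 2 := by
    intro i _
    have h1 : |x i - (c i : ℝ)| < ε / (D + 1) := hc i
    have h2 : dist (x i) ((c i : ℝ)) = |x i - (c i : ℝ)| := Real.dist_eq _ _
    nlinarith [abs_nonneg (x i - (c i : ℝ))]
  calc ∑ i, dist (x i) ((c i : ℝ)) ^ 2 ≤ ∑ _i : Fin D, (ε / (D + 1)) ^ 2 :=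
        Finset.sum_le_sum hle
    _ = D * (ε / (D + 1)) ^ 2 := by simp [Finset.sum_const, Finset.card_fin, nsmul_eq_mul]
    _ < ε ^ 2 := by
        rw [div_pow]
        have hD : (0:ℝ) < ((D:ℝ) + 1) ^ 2 := by positivity
        have h2 : (D:ℝ) < ((D:ℝ) + 1) ^ 2 := by nlinarith [Nat.cast_nonneg (α := ℝ) D]
        calc (D:ℝ) * (ε ^ 2 / ((D:ℝ)+1) ^ 2) < ((D:ℝ)+1)^2 * (ε ^ 2 / ((D:ℝ)+1) ^ 2) := by
              apply mul_lt_mul_of_pos_right h2; positivity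
          _ = ε ^ 2 := by field_simp

lemma exists_name (D : ℕ) (V : Set (EuclideanSpace ℝ (Fin D))) (hV : IsOpen V) :
    ∃ q : ℕ → (Fin D → ℚ) × ℚ,
      (∀ k, ratBall D (q k).1 (q k).2 ⊆ V) ∧ V = ⋃ k, ratBall D (q k).1 (q k).2 := by
  classical
  obtain ⟨e, he⟩ := exists_surjective_nat ((Fin D → ℚ) × ℚ)
  refine ⟨fun k => if ratBall D (e k).1 (e k).2 ⊆ V then e k else ((e k).1, 0), ?_, ?_⟩
  · intro k
    by_cases h : ratBall D (e k).1 (e k).2 ⊆ V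
    · simp [h]
    · simp only [h, if_false]
      simp [ratBall, Metric.ball_zero]
  · apply Set.Subset.antisymm
    · intro x hx
      obtain ⟨ε, hε, hball⟩ := Metric.isOpen_iff.1 hV x hx
      obtain ⟨c, hc⟩ := ratdense D x (by positivity : (0:ℝ) < ε / 3)
      obtain ⟨r, hr1, hr2⟩ := exists_rat_btwn (by linarith : (ε/3 : ℝ) < ε/2)
      have hsub : ratBall D c r ⊆ V := by
        intro y hy
        apply hball
        have hyc : dist y (WithLp.toLp 2 (fun i => ((c i : ℝ)))) < (r:ℝ) := hy
        have : dist y x ≤ dist y (WithLp.toLp 2 (fun i => ((c i : ℝ)))) + dist x (WithLp.toLp 2 (fun i => ((c i : ℝ)))) :=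
          dist_triangle_right _ _ _
        have : dist y x < ε := by linarith
        exact this
      obtain ⟨k, hk⟩ := he (c, r)
      refine Set.mem_iUnion.2 ⟨k, ?_⟩
      show x ∈ ratBall D (if ratBall D (e k).1 (e k).2 ⊆ V then e k else ((e k).1, 0)).1
        (if ratBall D (e k).1 (e k).2 ⊆ V then e k else ((e k).1, 0)).2
      rw [hk, if_pos hsub]
      show dist x (WithLp.toLp 2 (fun i => ((c i : ℝ)))) < (r:ℝ)
      linarith
    · intro x hx
      obtain ⟨k, hk⟩ := Set.mem_iUnion.1 hx
      revert hk
      by_cases h : ratBall D (e k).1 (e k).2 ⊆ V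
      · simp only [h, if_pos]; exact fun hk => h hk
      · simp only [h, if_false]
        simp [ratBall, Metric.ball_zero]

open Classical in
noncomputable def nm (D : ℕ) (V : Set (EuclideanSpace ℝ (Fin D))) : ℕ → (Fin D → ℚ) × ℚ :=
  if h : IsOpen V then (exists_name D V h).choose else fun _ => (fun _ => 0, 0)

lemma nm_sub (D : ℕ) {V : Set (EuclideanSpace ℝ (Fin D))} (hV : IsOpen V) :
    ∀ k, ratBall D (nm D V k).1 (nm D V k).2 ⊆ V := by
  unfold nm; rw [dif_pos hV]; exact (exists_name D V hV).choose_spec.1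

lemma nm_union (D : ℕ) {V : Set (EuclideanSpace ℝ (Fin D))} (hV : IsOpen V) :
    V = ⋃ k, ratBall D (nm D V k).1 (nm D V k).2 := by
  unfold nm; rw [dif_pos hV]; exact (exists_name D V hV).choose_spec.2

/-- The open set `X ∖ closedBall(c, r - 1/(j+1))` for a guess `w = (c,r)`. -/
def tgt (D : ℕ) (X : Set (EuclideanSpace ℝ (Fin D))) (w : (Fin D → ℚ) × ℚ) (j : ℕ) :
    Set (EuclideanSpace ℝ (Fin D)) :=
  X \ Metric.closedBall (WithLp.toLp 2 (fun i => ((w.1 i : ℝ)))) ((w.2 : ℝ) - 1 / (j + 1))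

lemma tgt_open {D : ℕ} {X : Set (EuclideanSpace ℝ (Fin D))} (hX : IsOpen X) (w) (j) :
    IsOpen (tgt D X w j) := hX.sdiff Metric.isClosed_closedBall

open Classical in
/-- The reduction function. -/
noncomputable def Fdef (D : ℕ) (X : Set (EuclideanSpace ℝ (Fin D)))
    (p : ℕ → (Fin D → ℚ) × ℚ) (K : ℕ) : (Fin D → ℚ) × ℚ :=
  if ∃ m', m' ≤ K.unpair.1.unpair.2 + K.unpair.2.unpair.1 ∧ K.unpair.1.unpair.2 < m' ∧
      p (Nat.pair K.unpair.1.unpair.1.unpair.1 m') ≠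
        p (Nat.pair K.unpair.1.unpair.1.unpair.1 K.unpair.1.unpair.2)
  then nm D X K.unpair.2.unpair.2
  else nm D (tgt D X (p (Nat.pair K.unpair.1.unpair.1.unpair.1 K.unpair.1.unpair.2))
      K.unpair.1.unpair.1.unpair.2) K.unpair.2.unpair.2

lemma Fdef_ball_sub {D : ℕ} {X : Set (EuclideanSpace ℝ (Fin D))} (hX : IsOpen X)
    (p : ℕ → (Fin D → ℚ) × ℚ) (K : ℕ) :
    ratBall D (Fdef D X p K).1 (Fdef D X p K).2 ⊆ X := by
  rw [Fdef]
  split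
  · exact nm_sub D hX _
  · exact (nm_sub D (tgt_open hX _ _) _).trans Set.diff_subset

/-- Row `t` of the output, as a set. -/
def Trow (D : ℕ) (X : Set (EuclideanSpace ℝ (Fin D))) (p : ℕ → (Fin D → ℚ) × ℚ) (t : ℕ) :
    Set (EuclideanSpace ℝ (Fin D)) :=
  ⋃ k, ratBall D (Fdef D X p (Nat.pair t k)).1 (Fdef D X p (Nat.pair t k)).2

lemma Trow_stable {D : ℕ} {X : Set (EuclideanSpace ℝ (Fin D))} (hX : IsOpen X)
    (p : ℕ → (Fin D → ℚ) × ℚ) (n j m : ℕ)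
    (h : ∀ m', m < m' → p (Nat.pair n m') = p (Nat.pair n m)) :
    Trow D X p (Nat.pair (Nat.pair n j) m) = tgt D X (p (Nat.pair n m)) j := by
  have hval : ∀ k, Fdef D X p (Nat.pair (Nat.pair (Nat.pair n j) m) k) =
      nm D (tgt D X (p (Nat.pair n m)) j) k.unpair.2 := by
    intro k
    rw [Fdef]
    simp only [Nat.unpair_pair]
    rw [if_neg]
    rintro ⟨m', _, hm', hne⟩
    exact hne (h m' hm')
  apply Set.Subset.antisymm
  · apply Set.iUnion_subset
    intro k
    rw [hval k]
    exact nm_sub D (tgt_open hX _ _) _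
  · intro x hx
    rw [nm_union D (tgt_open hX (p (Nat.pair n m)) j)] at hx
    obtain ⟨b, hb⟩ := Set.mem_iUnion.1 hx
    refine Set.mem_iUnion.2 ⟨Nat.pair 0 b, ?_⟩
    rw [hval (Nat.pair 0 b)]
    simpa [Nat.unpair_pair] using hb

lemma Trow_unstable {D : ℕ} {X : Set (EuclideanSpace ℝ (Fin D))} (hX : IsOpen X)
    (p : ℕ → (Fin D → ℚ) × ℚ) (n j m : ℕ)
    (h : ∃ m', m < m' ∧ p (Nat.pair n m') ≠ p (Nat.pair n m)) :
    Trow D X p (Nat.pair (Nat.pair n j) m) = X := by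
  obtain ⟨m', hm', hne⟩ := h
  apply Set.Subset.antisymm
  · exact Set.iUnion_subset fun k => Fdef_ball_sub hX p _
  · intro x hx
    rw [nm_union D hX] at hx
    obtain ⟨b, hb⟩ := Set.mem_iUnion.1 hx
    refine Set.mem_iUnion.2 ⟨Nat.pair m' b, ?_⟩
    have hval : Fdef D X p (Nat.pair (Nat.pair (Nat.pair n j) m) (Nat.pair m' b)) =
        nm D X b := by
      rw [Fdef]
      simp only [Nat.unpair_pair]
      rw [if_pos ⟨m', Nat.le_add_left m' m, hm', hne⟩]
    rw [hval]
    exact hb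

lemma Fdef_agree {D : ℕ} {X : Set (EuclideanSpace ℝ (Fin D))}
    {p p' : ℕ → (Fin D → ℚ) × ℚ} (K : ℕ)
    (h : ∀ m' ≤ K.unpair.1.unpair.2 + K.unpair.2.unpair.1,
      p (Nat.pair K.unpair.1.unpair.1.unpair.1 m') =
        p' (Nat.pair K.unpair.1.unpair.1.unpair.1 m')) :
    Fdef D X p K = Fdef D X p' K := by
  have hval : p (Nat.pair K.unpair.1.unpair.1.unpair.1 K.unpair.1.unpair.2) =
      p' (Nat.pair K.unpair.1.unpair.1.unpair.1 K.unpair.1.unpair.2) :=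
    h _ (Nat.le_add_right _ _)
  rw [Fdef, Fdef]
  apply if_congr _ rfl (by rw [hval])
  constructor
  · rintro ⟨m', h1, h2, h3⟩
    exact ⟨m', h1, h2, by rw [← h m' h1, ← hval]; exact h3⟩
  · rintro ⟨m', h1, h2, h3⟩
    exact ⟨m', h1, h2, by rw [h m' h1, hval]; exact h3⟩

lemma Fdef_continuous (D : ℕ) (X : Set (EuclideanSpace ℝ (Fin D))) :
    Continuous (Fdef D X) := by
  haveI : DiscreteTopology ℚ := ⟨rfl⟩
  apply continuous_pi
  intro K
  rw [continuous_iff_continuousAt]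
  intro p
  have hev : ∀ i : ℕ, ∀ᶠ p' in 𝓝 p, p' i = p i := by
    intro i
    have hc : Continuous (fun p' : ℕ → (Fin D → ℚ) × ℚ => p' i) := continuous_apply i
    have ho : IsOpen {p' : ℕ → (Fin D → ℚ) × ℚ | p' i = p i} :=
      hc.isOpen_preimage {p i} (isOpen_discrete _)
    exact eventually_of_mem (ho.mem_nhds rfl) fun p' hp' => hp'
  have hev2 : ∀ᶠ p' in 𝓝 p,
      ∀ m' ∈ Finset.range (K.unpair.1.unpair.2 + K.unpair.2.unpair.1 + 1),
        p' (Nat.pair K.unpair.1.unpair.1.unpair.1 m') =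
          p (Nat.pair K.unpair.1.unpair.1.unpair.1 m') :=
    (Filter.eventually_all_finset _).2 fun m' _ => hev _
  have hev3 : ∀ᶠ p' in 𝓝 p, Fdef D X p' K = Fdef D X p K := by
    filter_upwards [hev2] with p' hp'
    exact Fdef_agree K fun m' hm' => hp' m' (Finset.mem_range.2 (Nat.lt_succ_of_le hm'))
  rw [ContinuousAt, nhds_discrete ((Fin D → ℚ) × ℚ), Filter.tendsto_pure]
  filter_upwards [hev3] with p' hp' using hp'

theorem stmt12' (D : ℕ) (X : Set (EuclideanSpace ℝ (Fin D))) (hX : IsOpen X)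
    (U : Set (EuclideanSpace ℝ (Fin D))) (p : ℕ → (Fin D → ℚ) × ℚ)
    (z : ℕ → (Fin D → ℚ) × ℚ)
    (hM : ∀ n : ℕ, ∃ M : ℕ, ∀ m : ℕ, M ≤ m → p (Nat.pair n m) = z n)
    (hzsub : ∀ k, ratBall D (z k).1 (z k).2 ⊆ X)
    (hzU : U = ⋃ k, ratBall D (z k).1 (z k).2) :
    U = ⋃ t, X \ Trow D X p t := by
  apply Set.Subset.antisymm
  · intro x hx
    rw [hzU] at hx
    obtain ⟨n, hn⟩ := Set.mem_iUnion.1 hx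
    have hxX : x ∈ X := hzsub n hn
    have hd : dist x (WithLp.toLp 2 (fun i => (((z n).1 i : ℝ)))) < (((z n).2 : ℝ)) := hn
    obtain ⟨j, hj⟩ := exists_nat_one_div_lt
      (show (0:ℝ) < ((z n).2 : ℝ) - dist x (WithLp.toLp 2 (fun i => (((z n).1 i : ℝ)))) by linarith)
    obtain ⟨M, hMn⟩ := hM n
    refine Set.mem_iUnion.2 ⟨Nat.pair (Nat.pair n j) M, ?_⟩
    rw [Trow_stable hX p n j M (fun m' hm' => by rw [hMn m' (le_of_lt hm'), hMn M le_rfl])]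
    rw [hMn M le_rfl]
    refine ⟨hxX, fun hmem => hmem.2 ?_⟩
    rw [Metric.mem_closedBall]
    have : dist x (WithLp.toLp 2 (fun i => (((z n).1 i : ℝ)))) ≤ ((z n).2 : ℝ) - 1 / ((j : ℝ) + 1) := by
      linarith
    exact this
  · apply Set.iUnion_subset
    intro t
    have ht : Nat.pair (Nat.pair t.unpair.1.unpair.1 t.unpair.1.unpair.2) t.unpair.2 = t := by
      rw [Nat.pair_unpair, Nat.pair_unpair]
    set n := t.unpair.1.unpair.1 with hn
    set j := t.unpair.1.unpair.2 with hjdef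
    set m := t.unpair.2 with hmdef
    rw [← ht]
    by_cases hstab : ∀ m', m < m' → p (Nat.pair n m') = p (Nat.pair n m)
    · rw [Trow_stable hX p n j m hstab]
      have hz' : p (Nat.pair n m) = z n := by
        obtain ⟨M, hMn⟩ := hM n
        have h1 := hstab (max (m+1) M) (lt_of_lt_of_le (Nat.lt_succ_self m) (le_max_left _ _))
        have h2 := hMn (max (m+1) M) (le_max_right _ _)
        rw [← h1, h2]
      rw [hz']
      intro x hx
      simp only [tgt, Set.mem_diff, not_and, not_not] at hx
      have hcb := hx.2 hx.1
      rw [hzU]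
      refine Set.mem_iUnion.2 ⟨n, ?_⟩
      have h1 : dist x (WithLp.toLp 2 (fun i => (((z n).1 i : ℝ)))) ≤ ((z n).2 : ℝ) - 1 / ((j : ℝ) + 1) :=
        Metric.mem_closedBall.1 hcb
      have h2 : (0:ℝ) < 1 / ((j : ℝ) + 1) := by positivity
      show dist x (WithLp.toLp 2 (fun i => (((z n).1 i : ℝ)))) < (((z n).2 : ℝ))
      linarith
    · push_neg at hstab
      rw [Trow_unstable hX p n j m hstab]
      simp

/-- For open `X ⊆ ℝ^D`: `θ_< ∘ ι'` continuously reduces to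
`δ_{Σ_2}` restricted to the open subsets of `X`. -/
theorem stmt12 (D : ℕ) (X : Set (EuclideanSpace ℝ (Fin D))) (hX : IsOpen X) :
    ∃ F : (ℕ → (Fin D → ℚ) × ℚ) → (ℕ → (Fin D → ℚ) × ℚ),
      ContinuousOn F {p | ∃ U : Set (EuclideanSpace ℝ (Fin D)), IsThetaJumpName D X p U} ∧
      ∀ (U : Set (EuclideanSpace ℝ (Fin D))) (p : ℕ → (Fin D → ℚ) × ℚ),
        IsThetaJumpName D X p U → IsSigmaName D X 1 (F p) U := by
  refine ⟨Fdef D X, (Fdef_continuous D X).continuousOn, ?_⟩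
  rintro U p ⟨z, hM, hzsub, hzU⟩
  exact ⟨Trow D X p, fun t => ⟨fun k => Fdef_ball_sub hX p _, rfl⟩,
    stmt12' D X hX U p z hM hzsub hzU⟩
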